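/- The correlation coefficient of the Freund bivariate distribution, ρ = (β₁β₂−α₁α₂)/(√(α₂²+2α₁α₂+β₁²)·√(α₁²+2α₁α₂+β₂²)), satisfies −1/3 < ρ < 1 for all positive parameters α₁,α₂,β₁,β₂. -/
import Mathlib


open Real

/-- Correlation coefficient of the Freund bivariate distribution. -/
noncomputable def freundRho (a1 b1 a2 b2 : ℝ) : ℝ :=
  (b1 * b2 - a1 * a2) /
    (Real.sqrt (a2 ^ 2 + 2 * a1 * a2 + b1 ^ 2) * Real.sqrt (a1 ^ 2 + 2 * a1 * a2 + b2 ^ 2))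

theorem freund_rho_bounds (a1 b1 a2 b2 : ℝ)
    (ha1 : 0 < a1) (hb1 : 0 < b1) (ha2 : 0 < a2) (hb2 : 0 < b2) :
    -1 / 3 < freundRho a1 b1 a2 b2 ∧ freundRho a1 b1 a2 b2 < 1 := by
  unfold freundRho
  set D1 : ℝ := a2 ^ 2 + 2 * a1 * a2 + b1 ^ 2 with hD1
  set D2 : ℝ := a1 ^ 2 + 2 * a1 * a2 + b2 ^ 2 with hD2
  have hD1pos : 0 < D1 := by positivity
  have hD2pos : 0 < D2 := by positivity
  set s1 : ℝ := Real.sqrt D1 with hs1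
  set s2 : ℝ := Real.sqrt D2 with hs2
  have hs1pos : 0 < s1 := Real.sqrt_pos.mpr hD1pos
  have hs2pos : 0 < s2 := Real.sqrt_pos.mpr hD2pos
  have hs1sq : s1 ^ 2 = D1 := Real.sq_sqrt hD1pos.le
  have hs2sq : s2 ^ 2 = D2 := Real.sq_sqrt hD2pos.le
  have hden : 0 < s1 * s2 := mul_pos hs1pos hs2pos
  have hb1s : b1 < s1 := by
    rw [hs1]
    rw [show b1 = Real.sqrt (b1 ^ 2) from (Real.sqrt_sq hb1.le).symm]
    apply Real.sqrt_lt_sqrt (by positivity)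
    nlinarith [mul_pos ha1 ha2, sq_nonneg a2]
  have hb2s : b2 < s2 := by
    rw [hs2]
    rw [show b2 = Real.sqrt (b2 ^ 2) from (Real.sqrt_sq hb2.le).symm]
    apply Real.sqrt_lt_sqrt (by positivity)
    nlinarith [mul_pos ha1 ha2, sq_nonneg a1]
  constructor
  · rw [div_lt_div_iff₀ (by norm_num) hden]
    by_cases hcase : a1 * a2 ≤ b1 * b2
    · nlinarith [mul_pos hb1 hb2]
    · push_neg at hcase
      have key : 9 * (a1 * a2 - b1 * b2) ^ 2 < D1 * D2 := by
        nlinarith [mul_pos ha1 ha2, mul_pos hb1 hb2, sq_nonneg (a1 - a2),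
          mul_pos (mul_pos ha1 ha2) (mul_pos hb1 hb2),
          mul_pos (sub_pos.mpr hcase) (mul_pos hb1 hb2),
          mul_nonneg (mul_pos ha1 ha2).le (sq_nonneg (a1 - a2)),
          mul_nonneg (mul_pos hb1 hb2).le (sq_nonneg (a1 - a2)),
          sq_nonneg (a1 * b1 - a2 * b2), sq_nonneg (a1 * b2 - a2 * b1)]
      have h2 : (3 * (a1 * a2 - b1 * b2)) ^ 2 < (s1 * s2) ^ 2 := by
        rw [show (s1*s2)^2 = D1*D2 by rw [mul_pow, hs1sq, hs2sq]]; nlinarith [key]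
      have h3 : 3 * (a1 * a2 - b1 * b2) < s1 * s2 :=
        lt_of_pow_lt_pow_left₀ 2 hden.le h2
      linarith
  · rw [div_lt_one hden]
    nlinarith [mul_pos ha1 ha2, mul_pos hb1 hb2]
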